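/- arXiv:1809.01205 — 2 statements merged into one kernel-verified Lean document; each statement's English description precedes it below -/
import Mathlib

section
/- Assume the standing hypotheses with $C_{\phi,w}$ densely defined. If $C_{\phi,w}$ is $p$-hyponormal for some $p\in(0,\infty)$, then $C_{\phi,w}$ is $q$-hyponormal for every $q\in(0,p)$. Equivalently, in the characterization via conditional expectations: if $\mathsf{h}_{\phi,w}>0$ a.e. $[\mu_w]$ and $\mathsf{E}_{\phi,w}((\mathsf{h}_{\phi,w}^p\circ\phi)/\mathsf{h}_{\phi,w}^p)\le1$ a.e. $[\mu_w]$, then $\mathsf{E}_{\phi,w}((\mathsf{h}_{\phi,w}^q\circ\phi)/\mathsf{h}_{\phi,w}^q)\le1$ a.e. $[\mu_w]$ for all $0<q<p$. -/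
open MeasureTheory ENNReal NNReal Filter Topology

variable {X : Type*} [MeasurableSpace X]

/-- The measure `μ_w` with density `|w|²` with respect to `μ`. -/
noncomputable def wcMeasure (μ : Measure X) (w : X → ℂ) : Measure X :=
  μ.withDensity fun x => (‖w x‖₊ : ℝ≥0∞) ^ 2

/-- The Radon–Nikodym derivative `h_{φ,w} = d(μ_w ∘ φ⁻¹)/dμ`. -/
noncomputable def wcDeriv (μ : Measure X) (w : X → ℂ) (φ : X → X) : X → ℝ≥0∞ :=
  ((wcMeasure μ w).map φ).rnDeriv μ

/-- The modified weight `w_α = w · (h_{φ,w}/(h_{φ,w}∘φ))^{α/2}` (interpreted a.e.). -/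
noncomputable def wcAlpha (μ : Measure X) (w : X → ℂ) (φ : X → X) (α : ℝ) : X → ℂ :=
  fun x => w x * (((wcDeriv μ w φ x / wcDeriv μ w φ (φ x)) ^ (α / 2)).toReal : ℂ)

/-- `E` is (a version of) the conditional expectation of the nonnegative function `f`
with respect to the σ-algebra `φ⁻¹(𝒜)` and the measure `ν`. -/
def IsCondExp (φ : X → X) (ν : Measure X) (f E : X → ℝ≥0∞) : Prop :=
  Measurable[MeasurableSpace.comap φ inferInstance] E ∧
    ∀ s : Set X, MeasurableSet s → ∫⁻ x in φ ⁻¹' s, E x ∂ν = ∫⁻ x in φ ⁻¹' s, f x ∂ν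

/-- `g = E ∘ φ⁻¹`: the measurable function with `g ∘ φ = E` a.e. `[ν]`,
vanishing a.e. `[μ]` on the set where `h = 0`. -/
def IsQuot (φ : X → X) (μ ν : Measure X) (h : X → ℝ≥0∞) (E g : X → ℝ≥0∞) : Prop :=
  Measurable g ∧ (∀ᵐ x ∂ν, g (φ x) = E x) ∧ (∀ᵐ x ∂μ, h x = 0 → g x = 0)

/-- `E` is (a version of) the conditional expectation of the complex function `f`
with respect to the σ-algebra `φ⁻¹(𝒜)` and the measure `ν`. -/
def IsCondExpC (φ : X → X) (ν : Measure X) (f E : X → ℂ) : Prop :=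
  Measurable[MeasurableSpace.comap φ inferInstance] E ∧
    ∀ s : Set X, MeasurableSet s → ν (φ ⁻¹' s) < ⊤ →
      ∫ x in φ ⁻¹' s, E x ∂ν = ∫ x in φ ⁻¹' s, f x ∂ν

/-- `f_w = χ_{{w ≠ 0}} f / w`. -/
noncomputable def fw (w f : X → ℂ) : X → ℂ := fun x => if w x = 0 then 0 else f x / w x

/-! With `r = p / q ≥ 1` and `f = (h∘φ / h) ^ q`, so that `f ^ r = (h∘φ / h) ^ p`, the tangent
line of `t ↦ t ^ r` at `t = 1` gives `r • f ≤ f ^ r + (r - 1)` pointwise (also where `f = ∞`).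
Conditional expectations along `φ` are monotone and commute with these affine operations, hence
`r • E(f) ≤ E(f ^ r) + (r - 1) ≤ r`. This replaces the conditional Jensen inequality. -/

lemma ENNReal.ofReal_mul_le_rpow_add {r : ℝ} (hr : 1 ≤ r) (t : ℝ≥0∞) :
    ENNReal.ofReal r * t ≤ t ^ r + ENNReal.ofReal (r - 1) := by
  have hr0 : 0 ≤ r := zero_le_one.trans hr
  rcases eq_or_ne t ⊤ with rfl | ht
  · simp [ENNReal.top_rpow_of_pos (zero_lt_one.trans_le hr)]
  have hbernoulli : 1 + r * (t.toReal - 1) ≤ t.toReal ^ r := by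
    simpa using
      one_add_mul_self_le_rpow_one_add (s := t.toReal - 1) (by linarith [t.toReal_nonneg]) hr
  calc ENNReal.ofReal r * t = ENNReal.ofReal (r * t.toReal) := by
        rw [ENNReal.ofReal_mul hr0, ENNReal.ofReal_toReal ht]
    _ ≤ ENNReal.ofReal (t.toReal ^ r + (r - 1)) := ENNReal.ofReal_le_ofReal (by linarith)
    _ = t ^ r + ENNReal.ofReal (r - 1) := by
        rw [ENNReal.ofReal_add (by positivity) (by linarith),
          ← ENNReal.ofReal_rpow_of_nonneg t.toReal_nonneg hr0, ENNReal.ofReal_toReal ht]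

namespace IsCondExp

variable {φ : X → X} {ν : Measure X} {f f' E E' : X → ℝ≥0∞}

lemma const_mul (hE : IsCondExp φ ν f E) {c : ℝ≥0∞} (hc : c ≠ ∞) :
    IsCondExp φ ν (fun x => c * f x) (fun x => c * E x) :=
  ⟨hE.1.const_mul c, fun s hs => by
    rw [lintegral_const_mul' _ _ hc, lintegral_const_mul' _ _ hc, hE.2 s hs]⟩

lemma add_const (hE : IsCondExp φ ν f E) (c : ℝ≥0∞) :
    IsCondExp φ ν (fun x => f x + c) (fun x => E x + c) :=
  ⟨hE.1.add_const c, fun s hs => by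
    rw [lintegral_add_right _ measurable_const, lintegral_add_right _ measurable_const,
      hE.2 s hs]⟩

/-- Functions measurable for `φ⁻¹(𝒜)` factor as `e ∘ φ`, which moves the comparison to the
σ-finite measure `ν.map φ`. -/
lemma ae_le (hφ : Measurable φ) [SigmaFinite (ν.map φ)] (hE : IsCondExp φ ν f E)
    (hE' : IsCondExp φ ν f' E') (hff' : f ≤ᵐ[ν] f') : E ≤ᵐ[ν] E' := by
  obtain ⟨e, he, rfl⟩ := hE.1.exists_eq_measurable_comp
  obtain ⟨e', he', rfl⟩ := hE'.1.exists_eq_measurable_comp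
  suffices e ≤ᵐ[ν.map φ] e' from ae_of_ae_map hφ.aemeasurable this
  refine ae_le_of_forall_setLIntegral_le_of_sigmaFinite he fun s hs _ => ?_
  rw [setLIntegral_map hs he hφ, setLIntegral_map hs he' hφ]
  calc ∫⁻ x in φ ⁻¹' s, e (φ x) ∂ν = ∫⁻ x in φ ⁻¹' s, f x ∂ν := hE.2 s hs
    _ ≤ ∫⁻ x in φ ⁻¹' s, f' x ∂ν := lintegral_mono_ae (ae_restrict_of_ae hff')
    _ = ∫⁻ x in φ ⁻¹' s, e' (φ x) ∂ν := (hE'.2 s hs).symm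

end IsCondExp

lemma exists_isCondExp {φ : X → X} (hφ : Measurable φ) (ν : Measure X) [SFinite ν]
    [SigmaFinite (ν.map φ)] (f : X → ℝ≥0∞) : ∃ E, IsCondExp φ ν f E := by
  set g := ((ν.withDensity f).map φ).rnDeriv (ν.map φ)
  have hg : Measurable g := Measure.measurable_rnDeriv _ _
  have hac : (ν.withDensity f).map φ ≪ ν.map φ :=
    (withDensity_absolutelyContinuous ν f).map hφ
  refine ⟨g ∘ φ, hg.comp (comap_measurable φ), fun s hs => ?_⟩
  rw [Function.comp_def, ← setLIntegral_map hs hg hφ, ← withDensity_apply _ hs,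
    Measure.withDensity_rnDeriv_eq _ _ hac, Measure.map_apply hφ hs, withDensity_apply _ (hφ hs)]

instance wcMeasure.instSFinite {μ : Measure X} [SFinite μ] {w : X → ℂ} :
    SFinite (wcMeasure μ w) := by
  unfold wcMeasure; infer_instance

lemma sigmaFinite_map_wcMeasure {μ : Measure X} [SigmaFinite μ] {w : X → ℂ} {φ : X → X}
    (habs : (wcMeasure μ w).map φ ≪ μ) (hfin : ∀ᵐ x ∂μ, wcDeriv μ w φ x < ⊤) :
    SigmaFinite ((wcMeasure μ w).map φ) := by
  rw [← Measure.withDensity_rnDeriv_eq _ _ habs]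
  exact SigmaFinite.withDensity_of_ne_top (hfin.mono fun x hx => hx.ne)

theorem aluthge_wco_p_hyponormal_mono_general
    (μ : Measure X) [SigmaFinite μ] (w : X → ℂ) (φ : X → X)
    (hφ : Measurable φ)
    (habs : (wcMeasure μ w).map φ ≪ μ)
    (hfin : ∀ᵐ x ∂μ, wcDeriv μ w φ x < ⊤)
    (p q : ℝ) (hq : 0 < q) (hqp : q < p)
    (hhyp : ∀ E : X → ℝ≥0∞,
      IsCondExp φ (wcMeasure μ w)
        (fun x => wcDeriv μ w φ (φ x) ^ p / wcDeriv μ w φ x ^ p) E →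
      ∀ᵐ x ∂(wcMeasure μ w), E x ≤ 1) :
    ∀ E : X → ℝ≥0∞,
      IsCondExp φ (wcMeasure μ w)
        (fun x => wcDeriv μ w φ (φ x) ^ q / wcDeriv μ w φ x ^ q) E →
      ∀ᵐ x ∂(wcMeasure μ w), E x ≤ 1 := by
  intro E hE
  set h := wcDeriv μ w φ
  have := sigmaFinite_map_wcMeasure habs hfin
  have hr : 1 ≤ p / q := (one_le_div hq).mpr hqp.le
  have hpow (x : X) : (h (φ x) ^ q / h x ^ q) ^ (p / q) = h (φ x) ^ p / h x ^ p := by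
    rw [ENNReal.div_rpow_of_nonneg _ _ (by positivity), ← ENNReal.rpow_mul, ← ENNReal.rpow_mul,
      mul_div_cancel₀ p hq.ne']
  obtain ⟨Ep, hEp⟩ := exists_isCondExp hφ (wcMeasure μ w) (fun x => h (φ x) ^ p / h x ^ p)
  have hcmp : (fun x => ENNReal.ofReal (p / q) * E x) ≤ᵐ[wcMeasure μ w]
      fun x => Ep x + ENNReal.ofReal (p / q - 1) :=
    (hE.const_mul ENNReal.ofReal_ne_top).ae_le hφ (hEp.add_const _) <|
      Eventually.of_forall fun x => (ENNReal.ofReal_mul_le_rpow_add hr _).trans_eq (by rw [hpow])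
  filter_upwards [hcmp, hhyp Ep hEp] with x hx hEpx
  have hr0 : ENNReal.ofReal (p / q) ≠ 0 := (ENNReal.ofReal_pos.mpr (by linarith)).ne'
  refine (ENNReal.mul_le_mul_iff_right hr0 ENNReal.ofReal_ne_top).mp ?_
  calc ENNReal.ofReal (p / q) * E x ≤ 1 + ENNReal.ofReal (p / q - 1) := hx.trans (by gcongr)
    _ = ENNReal.ofReal (p / q) * 1 := by
      rw [mul_one, ← ENNReal.ofReal_one, ← ENNReal.ofReal_add zero_le_one (by linarith),
        add_sub_cancel]

/-- `p`-hyponormality implies `q`-hyponormality for `0 < q < p`, in the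
characterization via conditional expectations: if `h_{φ,w} > 0` a.e. `[μ_w]` and
`E_{φ,w}((h^p∘φ)/h^p) ≤ 1` a.e. `[μ_w]`, then `E_{φ,w}((h^q∘φ)/h^q) ≤ 1` a.e. `[μ_w]`. -/
theorem aluthge_wco_p_hyponormal_mono
    (μ : Measure X) [SigmaFinite μ] (w : X → ℂ) (φ : X → X)
    (hw : Measurable w) (hφ : Measurable φ)
    (habs : (wcMeasure μ w).map φ ≪ μ)
    (hfin : ∀ᵐ x ∂μ, wcDeriv μ w φ x < ⊤)
    (p q : ℝ) (hq : 0 < q) (hqp : q < p)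
    (hpos : ∀ᵐ x ∂(wcMeasure μ w), 0 < wcDeriv μ w φ x)
    (hhyp : ∀ E : X → ℝ≥0∞,
      IsCondExp φ (wcMeasure μ w)
        (fun x => wcDeriv μ w φ (φ x) ^ p / wcDeriv μ w φ x ^ p) E →
      ∀ᵐ x ∂(wcMeasure μ w), E x ≤ 1) :
    ∀ E : X → ℝ≥0∞,
      IsCondExp φ (wcMeasure μ w)
        (fun x => wcDeriv μ w φ (φ x) ^ q / wcDeriv μ w φ x ^ q) E →
      ∀ᵐ x ∂(wcMeasure μ w), E x ≤ 1 :=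
  aluthge_wco_p_hyponormal_mono_general μ w φ hφ habs hfin p q hq hqp hhyp
end

section
/- Assume the standing hypotheses with $C_{\phi,w}$ densely defined, and let $\alpha\in(0,1]$. Then $C_{\phi,w}$ is quasinormal (equivalently, $\mathsf{h}_{\phi,w}\circ\phi = \mathsf{h}_{\phi,w}$ a.e. $[\mu_w]$) if and only if the $\alpha$-Aluthge transform satisfies $\Delta_\alpha(C_{\phi,w}) = C_{\phi,w}$ (as an equality of unbounded operators, including domains). -/
open MeasureTheory ENNReal NNReal Filter Topology

variable {X : Type*} [MeasurableSpace X]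

/-- The weight `w̃ = w/(h_{φ,w}∘φ)^{1/2}` of the partial isometry in the polar
decomposition `C_{φ,w} = U |C_{φ,w}|`, `U = C_{φ,w̃}`. -/
noncomputable def wcTilde (μ : Measure X) (w : X → ℂ) (φ : X → X) : X → ℂ :=
  fun x => w x * (((wcDeriv μ w φ (φ x)) ^ (-(1 / 2) : ℝ)).toReal : ℂ)

/-- The function `Δ_α(C_{φ,w}) f = |C_{φ,w}|^α U |C_{φ,w}|^{1-α} f`, computed via
`|C_{φ,w}| = M_{h^{1/2}}` and `U = C_{φ,w̃}`. -/
noncomputable def aluthgeFun (μ : Measure X) (w : X → ℂ) (φ : X → X) (α : ℝ) (f : X → ℂ) :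
    X → ℂ :=
  fun x => ((wcDeriv μ w φ x ^ (α / 2)).toReal : ℂ) *
    (wcTilde μ w φ x * (((wcDeriv μ w φ (φ x)) ^ ((1 - α) / 2)).toReal : ℂ) * f (φ x))

/-- Membership in the domain of the Aluthge transform
`Δ_α(C_{φ,w}) = |C_{φ,w}|^α U |C_{φ,w}|^{1-α}`. -/
noncomputable def aluthgeDom (μ : Measure X) (w : X → ℂ) (φ : X → X) (α : ℝ) (f : X → ℂ) :
    Prop :=
  MemLp f 2 μ ∧
  MemLp (fun x => ((wcDeriv μ w φ x ^ ((1 - α) / 2)).toReal : ℂ) * f x) 2 μ ∧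
  MemLp (fun x =>
    wcTilde μ w φ x * (((wcDeriv μ w φ (φ x)) ^ ((1 - α) / 2)).toReal : ℂ) * f (φ x)) 2 μ ∧
  MemLp (aluthgeFun μ w φ α f) 2 μ

/-! Writing `h = h_{φ,w}`, the Aluthge transform is the weighted composition operator with
weight `w_α = w · (h / h ∘ φ)^{α/2}`, so its action agrees with that of `C_{φ,w}` exactly when
`h ∘ φ = h` a.e. `[μ_w]`. The domains then agree as well: `h^{1-α} ≤ 1 + h` puts `D(C_{φ,w})`
inside `D(|C_{φ,w}|^{1-α})`, and `U` is a contraction because `h · (h^{-1/2})² ≤ 1`. Conversely, the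
indicators of the sets of finite measure on which `h` is bounded lie in `D(C_{φ,w})` and exhaust
`{h < ∞}`, which carries `μ_w ∘ φ⁻¹`; testing `Δ_α(C_{φ,w}) = C_{φ,w}` on them forces
`w_α = w` a.e. `[μ_w]`. -/

namespace ENNReal

lemma enorm_ofReal_toReal_le (t : ℝ≥0∞) : ‖((t.toReal : ℝ) : ℂ)‖ₑ ≤ t := by
  rw [enorm_eq_nnnorm, Complex.nnnorm_real, ← enorm_eq_nnnorm, Real.enorm_eq_ofReal toReal_nonneg]
  exact ofReal_toReal_le

lemma rpow_le_one_add {c : ℝ} (h0 : 0 ≤ c) (h1 : c ≤ 1) (e : ℝ≥0∞) : e ^ c ≤ 1 + e := by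
  rcases le_total e 1 with he | he
  · exact (rpow_le_one he h0).trans le_self_add
  · exact ((rpow_le_rpow_of_exponent_le he h1).trans_eq (rpow_one e)).trans le_add_self

lemma toReal_rpow_div_eq_one_iff {a b : ℝ≥0∞} (hb0 : b ≠ 0) (hbt : b ≠ ∞) {s : ℝ}
    (hs : s ≠ 0) : ((a / b) ^ s).toReal = 1 ↔ a = b := by
  rw [toReal_eq_one_iff, ← one_rpow s, (rpow_left_injective hs).eq_iff, div_eq_one_iff hb0 hbt]

lemma toReal_div_rpow_half_eq_mul {α : ℝ} (hα : α ≠ 0) (a b : ℝ≥0∞) :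
    ((a / b) ^ (α / 2)).toReal =
      (a ^ (α / 2)).toReal * (b ^ (-(1 / 2) : ℝ)).toReal * (b ^ ((1 - α) / 2)).toReal := by
  rw [← toReal_rpow, ← toReal_rpow, ← toReal_rpow, ← toReal_rpow, toReal_div, mul_assoc,
    ← Real.rpow_add' toReal_nonneg (by contrapose! hα; linarith),
    show -(1 / 2 : ℝ) + (1 - α) / 2 = -(α / 2) by ring, Real.rpow_neg toReal_nonneg,
    Real.div_rpow toReal_nonneg toReal_nonneg]
  exact div_eq_mul_inv _ _

lemma mul_enorm_toReal_rpow_neg_half_sq_le_one (b : ℝ≥0∞) :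
    b * ‖((b ^ (-(1 / 2) : ℝ)).toReal : ℂ)‖ₑ ^ 2 ≤ 1 :=
  calc b * ‖((b ^ (-(1 / 2) : ℝ)).toReal : ℂ)‖ₑ ^ 2 ≤ b * (b ^ (-(1 / 2) : ℝ)) ^ 2 := by
        gcongr; exact enorm_ofReal_toReal_le _
    _ = b * b⁻¹ := by rw [← rpow_natCast, ← rpow_mul, ← rpow_neg_one]; norm_num
    _ ≤ 1 := ENNReal.mul_inv_le_one b

end ENNReal

lemma measurable_wcDeriv (μ : Measure X) (w : X → ℂ) (φ : X → X) :
    Measurable (wcDeriv μ w φ) :=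
  Measure.measurable_rnDeriv _ _

section WeightedComposition

variable {μ : Measure X}

lemma memLp_two_iff_lintegral_enorm_sq_lt_top {E : Type*} [NormedAddCommGroup E] {f : X → E}
    (hf : AEStronglyMeasurable f μ) :
    MemLp f 2 μ ↔ ∫⁻ x, ‖f x‖ₑ ^ 2 ∂μ < ∞ := by
  rw [MemLp, and_iff_right hf,
    eLpNorm_lt_top_iff_lintegral_rpow_enorm_lt_top two_ne_zero ofNat_ne_top]
  norm_num

lemma memLp_toReal_rpow_mul {d : X → ℝ≥0∞} (hd : Measurable d) {c : ℝ}
    (hc0 : 0 ≤ c) (hc1 : c ≤ 1) {f : X → ℂ} (hf : MemLp f 2 μ)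
    (hdf : ∫⁻ x, d x * ‖f x‖ₑ ^ 2 ∂μ < ∞) :
    MemLp (fun x => ((d x ^ (c / 2)).toReal : ℂ) * f x) 2 μ := by
  have hmeas : AEStronglyMeasurable (fun x => ((d x ^ (c / 2)).toReal : ℂ) * f x) μ :=
    (Complex.measurable_ofReal.comp (hd.pow_const _).ennreal_toReal).aestronglyMeasurable.mul hf.1
  have hf2 : AEMeasurable (fun x => ‖f x‖ₑ ^ 2) μ := hf.1.enorm.pow_const 2
  rw [memLp_two_iff_lintegral_enorm_sq_lt_top hmeas]
  calc ∫⁻ x, ‖((d x ^ (c / 2)).toReal : ℂ) * f x‖ₑ ^ 2 ∂μ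
      ≤ ∫⁻ x, (1 + d x) * ‖f x‖ₑ ^ 2 ∂μ := lintegral_mono fun x => ?_
    _ = ∫⁻ x, ‖f x‖ₑ ^ 2 ∂μ + ∫⁻ x, d x * ‖f x‖ₑ ^ 2 ∂μ := by
      simp only [add_mul, one_mul]; exact lintegral_add_left' hf2 _
    _ < ∞ := add_lt_top.2 ⟨(memLp_two_iff_lintegral_enorm_sq_lt_top hf.1).1 hf, hdf⟩
  rw [enorm_mul, mul_pow]
  gcongr
  calc ‖((d x ^ (c / 2)).toReal : ℂ)‖ₑ ^ 2 ≤ (d x ^ (c / 2)) ^ 2 := by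
        gcongr; exact enorm_ofReal_toReal_le _
    _ = d x ^ c := by rw [← ENNReal.rpow_natCast, ← ENNReal.rpow_mul]; norm_num
    _ ≤ 1 + d x := rpow_le_one_add hc0 hc1 _

variable {w : X → ℂ} {φ : X → X}

lemma wcMeasure_absolutelyContinuous : wcMeasure μ w ≪ μ :=
  withDensity_absolutelyContinuous _ _

lemma ae_wcMeasure_iff (hw : Measurable w) {p : X → Prop} :
    (∀ᵐ x ∂wcMeasure μ w, p x) ↔ ∀ᵐ x ∂μ, w x ≠ 0 → p x := by
  rw [wcMeasure, ae_withDensity_iff (by fun_prop)]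
  simp

instance [SFinite μ] : SFinite (wcMeasure μ w) := by
  unfold wcMeasure; infer_instance

lemma withDensity_wcDeriv [SigmaFinite μ] (habs : (wcMeasure μ w).map φ ≪ μ) :
    μ.withDensity (wcDeriv μ w φ) = (wcMeasure μ w).map φ :=
  Measure.withDensity_rnDeriv_eq _ _ habs

lemma ae_wcMeasure_wcDeriv_comp_ne_zero_ne_top [SigmaFinite μ] (hφ : Measurable φ)
    (habs : (wcMeasure μ w).map φ ≪ μ) (hfin : ∀ᵐ x ∂μ, wcDeriv μ w φ x < ∞) :
    ∀ᵐ x ∂wcMeasure μ w, wcDeriv μ w φ (φ x) ≠ 0 ∧ wcDeriv μ w φ (φ x) ≠ ∞ := by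
  refine ae_of_ae_map (p := fun y => wcDeriv μ w φ y ≠ 0 ∧ wcDeriv μ w φ y ≠ ∞) hφ.aemeasurable ?_
  rw [← withDensity_wcDeriv habs, ae_withDensity_iff (measurable_wcDeriv μ w φ)]
  filter_upwards [hfin] with y hy h0 using ⟨h0, hy.ne⟩

lemma lintegral_enorm_sq_mul_comp [SigmaFinite μ] (hw : Measurable w) (hφ : Measurable φ)
    (habs : (wcMeasure μ w).map φ ≪ μ) {G : X → ℝ≥0∞} (hG : AEMeasurable G μ) :
    ∫⁻ x, ‖w x‖ₑ ^ 2 * G (φ x) ∂μ = ∫⁻ x, wcDeriv μ w φ x * G x ∂μ := by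
  have hGw : AEMeasurable G ((wcMeasure μ w).map φ) := hG.mono_ac habs
  calc ∫⁻ x, ‖w x‖ₑ ^ 2 * G (φ x) ∂μ = ∫⁻ x, G (φ x) ∂wcMeasure μ w :=
        (lintegral_withDensity_eq_lintegral_mul₀' (by fun_prop)
          (hGw.comp_aemeasurable hφ.aemeasurable)).symm
    _ = ∫⁻ y, G y ∂(wcMeasure μ w).map φ := (lintegral_map' hGw hφ.aemeasurable).symm
    _ = ∫⁻ y, G y ∂μ.withDensity (wcDeriv μ w φ) := by rw [withDensity_wcDeriv habs]
    _ = ∫⁻ x, wcDeriv μ w φ x * G x ∂μ :=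
        lintegral_withDensity_eq_lintegral_mul₀ (measurable_wcDeriv μ w φ).aemeasurable hG

lemma aestronglyMeasurable_mul_comp (hw : Measurable w) (hφ : Measurable φ)
    (habs : (wcMeasure μ w).map φ ≪ μ) {g : X → ℂ} (hg : AEStronglyMeasurable g μ) :
    AEStronglyMeasurable (fun x => w x * g (φ x)) μ := by
  have hcomp : ∀ᵐ x ∂wcMeasure μ w, g (φ x) = hg.mk g (φ x) :=
    ae_of_ae_map (p := fun y => g y = hg.mk g y) hφ.aemeasurable (habs.ae_le hg.ae_eq_mk)
  refine (hw.aestronglyMeasurable.mul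
    (hg.stronglyMeasurable_mk.comp_measurable hφ).aestronglyMeasurable).congr ?_
  filter_upwards [(ae_wcMeasure_iff hw).1 hcomp] with x hx
  by_cases hwx : w x = 0
  · simp [hwx]
  · simp [hx hwx]

lemma memLp_two_mul_comp_iff [SigmaFinite μ] (hw : Measurable w) (hφ : Measurable φ)
    (habs : (wcMeasure μ w).map φ ≪ μ) {g : X → ℂ} (hg : AEStronglyMeasurable g μ) :
    MemLp (fun x => w x * g (φ x)) 2 μ ↔ ∫⁻ x, wcDeriv μ w φ x * ‖g x‖ₑ ^ 2 ∂μ < ∞ := by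
  rw [memLp_two_iff_lintegral_enorm_sq_lt_top (aestronglyMeasurable_mul_comp hw hφ habs hg),
    ← lintegral_enorm_sq_mul_comp hw hφ habs (hg.enorm.pow_const 2)]
  simp only [enorm_mul, mul_pow]

lemma memLp_wcTilde_mul_comp [SigmaFinite μ] (hw : Measurable w) (hφ : Measurable φ)
    (habs : (wcMeasure μ w).map φ ≪ μ) {g : X → ℂ} (hg : MemLp g 2 μ) :
    MemLp (fun x => wcTilde μ w φ x * g (φ x)) 2 μ := by
  set k : X → ℂ := fun y => ((wcDeriv μ w φ y ^ (-(1 / 2) : ℝ)).toReal : ℂ)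
  have hk : Measurable k :=
    Complex.measurable_ofReal.comp ((measurable_wcDeriv μ w φ).pow_const _).ennreal_toReal
  have hU : (fun x => wcTilde μ w φ x * g (φ x)) = fun x => w x * (k (φ x) * g (φ x)) := by
    funext x; simp only [wcTilde, k]; ring
  rw [hU, memLp_two_mul_comp_iff hw hφ habs (g := fun y => k y * g y)
    (hk.aestronglyMeasurable.mul hg.1)]
  refine lt_of_le_of_lt (lintegral_mono fun y => ?_)
    ((memLp_two_iff_lintegral_enorm_sq_lt_top hg.1).1 hg)
  calc wcDeriv μ w φ y * ‖k y * g y‖ₑ ^ 2 = wcDeriv μ w φ y * ‖k y‖ₑ ^ 2 * ‖g y‖ₑ ^ 2 := by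
        rw [enorm_mul, mul_pow, mul_assoc]
    _ ≤ 1 * ‖g y‖ₑ ^ 2 := by gcongr; exact mul_enorm_toReal_rpow_neg_half_sq_le_one _
    _ = ‖g y‖ₑ ^ 2 := one_mul _

lemma aluthgeDom_of_memLp [SigmaFinite μ] (hw : Measurable w) (hφ : Measurable φ)
    (habs : (wcMeasure μ w).map φ ≪ μ) {α : ℝ} (hα0 : 0 ≤ α) (hα1 : α ≤ 1) {f : X → ℂ}
    (hf : MemLp f 2 μ) (hCf : MemLp (fun x => w x * f (φ x)) 2 μ)
    (hΔ : MemLp (aluthgeFun μ w φ α f) 2 μ) : aluthgeDom μ w φ α f := by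
  have hg := memLp_toReal_rpow_mul (measurable_wcDeriv μ w φ) (c := 1 - α) (by linarith)
    (by linarith) hf ((memLp_two_mul_comp_iff hw hφ habs hf.1).1 hCf)
  exact ⟨hf, hg, by simpa only [mul_assoc] using memLp_wcTilde_mul_comp hw hφ habs hg, hΔ⟩

lemma aluthgeFun_eq_wcAlpha_mul {α : ℝ} (hα : α ≠ 0) (f : X → ℂ) :
    aluthgeFun μ w φ α f = fun x => wcAlpha μ w φ α x * f (φ x) := by
  funext x
  rw [aluthgeFun, wcAlpha, wcTilde, ENNReal.toReal_div_rpow_half_eq_mul hα]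
  push_cast
  ring

lemma ae_wcDeriv_comp_eq_iff_wcAlpha_ae_eq [SigmaFinite μ] (hw : Measurable w)
    (hφ : Measurable φ) (habs : (wcMeasure μ w).map φ ≪ μ)
    (hfin : ∀ᵐ x ∂μ, wcDeriv μ w φ x < ∞) {α : ℝ} (hα : α ≠ 0) :
    (∀ᵐ x ∂wcMeasure μ w, wcDeriv μ w φ (φ x) = wcDeriv μ w φ x) ↔
      wcAlpha μ w φ α =ᵐ[wcMeasure μ w] w := by
  refine eventually_congr ?_
  filter_upwards [ae_wcMeasure_wcDeriv_comp_ne_zero_ne_top hφ habs hfin,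
    (ae_wcMeasure_iff hw).2 (ae_of_all _ fun _ => id)] with x ⟨h0, htop⟩ hwx
  rw [wcAlpha, mul_eq_left₀ hwx, Complex.ofReal_eq_one,
    ENNReal.toReal_rpow_div_eq_one_iff h0 htop (div_ne_zero hα two_ne_zero), eq_comm]

lemma ae_eq_of_forall_mul_comp_ae_eq [SigmaFinite μ] (hw : Measurable w) (hφ : Measurable φ)
    (habs : (wcMeasure μ w).map φ ≪ μ) (hfin : ∀ᵐ x ∂μ, wcDeriv μ w φ x < ∞) {v : X → ℂ}
    (hvw : ∀ f : X → ℂ, MemLp f 2 μ → MemLp (fun x => w x * f (φ x)) 2 μ →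
      (fun x => v x * f (φ x)) =ᵐ[μ] fun x => w x * f (φ x)) :
    v =ᵐ[wcMeasure μ w] w := by
  let S : ℕ → Set X := fun n => spanningSets μ n ∩ {y | wcDeriv μ w φ y ≤ n}
  have hS : ∀ n, MeasurableSet (S n) := fun n =>
    (measurableSet_spanningSets μ n).inter (measurable_wcDeriv μ w φ measurableSet_Iic)
  have hμS : ∀ n, μ (S n) < ∞ := fun n =>
    (measure_mono Set.inter_subset_left).trans_lt (measure_spanningSets_lt_top μ n)
  have htest : ∀ n, (fun x => v x * (S n).indicator (fun _ => (1 : ℂ)) (φ x)) =ᵐ[μ]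
      fun x => w x * (S n).indicator (fun _ => (1 : ℂ)) (φ x) := by
    intro n
    refine hvw _ (memLp_indicator_const 2 (hS n) 1 (Or.inr (hμS n).ne))
      ((memLp_two_mul_comp_iff hw hφ habs (aestronglyMeasurable_const.indicator (hS n))).2 ?_)
    calc ∫⁻ y, wcDeriv μ w φ y * ‖(S n).indicator (fun _ => (1 : ℂ)) y‖ₑ ^ 2 ∂μ
        ≤ ∫⁻ y, (S n).indicator (fun _ => (n : ℝ≥0∞)) y ∂μ := lintegral_mono fun y => ?_
      _ = n * μ (S n) := lintegral_indicator_const (hS n) _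
      _ < ∞ := mul_lt_top (natCast_lt_top n) (hμS n)
    by_cases hy : y ∈ S n
    · simpa [hy] using hy.2
    · simp [hy]
  have hcover : ∀ y, wcDeriv μ w φ y ≠ ∞ → ∃ n, y ∈ S n := fun y hy => by
    obtain ⟨m, hm⟩ := ENNReal.exists_nat_gt hy
    refine ⟨max (spanningSetsIndex μ y) m,
      monotone_spanningSets μ (le_max_left _ _) (mem_spanningSetsIndex μ y), ?_⟩
    exact hm.le.trans (by exact_mod_cast le_max_right _ _)
  filter_upwards [wcMeasure_absolutelyContinuous.ae_le (ae_all_iff.2 htest),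
    ae_wcMeasure_wcDeriv_comp_ne_zero_ne_top hφ habs hfin] with x hx hxt
  obtain ⟨n, hn⟩ := hcover _ hxt.2
  simpa [Set.indicator_of_mem hn] using hx n

end WeightedComposition

/-- `C_{φ,w}` is quasinormal (equivalently `h_{φ,w}∘φ = h_{φ,w}` a.e.
`[μ_w]`) iff `Δ_α(C_{φ,w}) = C_{φ,w}` as unbounded operators (equal domains and equal
action on the common domain). -/
theorem aluthge_wco_quasinormal_iff_fixed
    (μ : Measure X) [SigmaFinite μ] (w : X → ℂ) (φ : X → X)
    (hw : Measurable w) (hφ : Measurable φ)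
    (habs : (wcMeasure μ w).map φ ≪ μ)
    (hfin : ∀ᵐ x ∂μ, wcDeriv μ w φ x < ⊤)
    (α : ℝ) (hα : α ∈ Set.Ioc (0 : ℝ) 1) :
    (∀ᵐ x ∂(wcMeasure μ w), wcDeriv μ w φ (φ x) = wcDeriv μ w φ x) ↔
    ((∀ f : X → ℂ, aluthgeDom μ w φ α f ↔
        (MemLp f 2 μ ∧ MemLp (fun x => w x * f (φ x)) 2 μ)) ∧
      (∀ f : X → ℂ, aluthgeDom μ w φ α f →
        aluthgeFun μ w φ α f =ᵐ[μ] fun x => w x * f (φ x))) := by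
  obtain ⟨hα0, hα1⟩ := hα
  rw [ae_wcDeriv_comp_eq_iff_wcAlpha_ae_eq hw hφ habs hfin hα0.ne']
  constructor
  · intro hq
    have hC : ∀ f : X → ℂ, aluthgeFun μ w φ α f =ᵐ[μ] fun x => w x * f (φ x) := fun f => by
      rw [aluthgeFun_eq_wcAlpha_mul hα0.ne']
      filter_upwards [(ae_wcMeasure_iff hw).1 hq] with x hx
      by_cases hwx : w x = 0
      · simp [wcAlpha, hwx]
      · rw [hx hwx]
    exact ⟨fun f => ⟨fun hd => ⟨hd.1, hd.2.2.2.ae_eq (hC f)⟩, fun ⟨hf, hCf⟩ =>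
      aluthgeDom_of_memLp hw hφ habs hα0.le hα1 hf hCf (hCf.ae_eq (hC f).symm)⟩,
      fun f _ => hC f⟩
  · rintro ⟨hdom, hact⟩
    refine ae_eq_of_forall_mul_comp_ae_eq hw hφ habs hfin fun f hf hCf => ?_
    rw [← aluthgeFun_eq_wcAlpha_mul hα0.ne']
    exact hact f ((hdom f).2 ⟨hf, hCf⟩)
end
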